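/- Let X be a topological space, let φ be a flow on X, and let f₁, f₂ be two Lyapunov functions for φ. Define H : ℝ × X → T(φ) × ℝ by H(s, x) = (Γ(x), s·f₁(x) + (1 − s)·f₂(x)). Then H is continuous, H(0, ·) = α(f₂, φ), H(1, ·) = α(f₁, φ), and for every s ∈ [0, 1] the map H(s, ·) : X → T(φ) × ℝ is injective. Hence the two embeddings α(f₁, φ) and α(f₂, φ) are homotopic through injective continuous maps. -/
import Mathlib


/-- **Any two Lyapunov embeddings are homotopic through injective continuous
maps.** Given two Lyapunov functions `f₁, f₂` for a flow `φ` on `X`, the map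
`H : ℝ × X → T(φ) × ℝ`, `H (s, x) = (Γ x, s • f₁ x + (1 - s) • f₂ x)`, is
continuous, agrees with `α(f₂, φ)` at `s = 0` and with `α(f₁, φ)` at
`s = 1`, and `H (s, ·)` is injective for every `s ∈ [0, 1]`. -/
theorem lyapunov_embeddings_homotopic
    {X : Type*} [TopologicalSpace X] (φ : Flow ℝ X)
    (f₁ f₂ : X → ℝ) (hf₁ : Continuous f₁) (hf₂ : Continuous f₂)
    (hLyap₁ : ∀ x : X, ∀ t : ℝ, 0 < t → f₁ x < f₁ (φ t x))
    (hLyap₂ : ∀ x : X, ∀ t : ℝ, 0 < t → f₂ x < f₂ (φ t x)) :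
    Continuous (fun p : ℝ × X =>
        ((Quot.mk (fun x y : X => ∃ t : ℝ, φ t x = y) p.2,
          p.1 * f₁ p.2 + (1 - p.1) * f₂ p.2) :
          Quot (fun x y : X => ∃ t : ℝ, φ t x = y) × ℝ)) ∧
    (fun x : X =>
        ((Quot.mk (fun x y : X => ∃ t : ℝ, φ t x = y) x,
          (0 : ℝ) * f₁ x + (1 - (0 : ℝ)) * f₂ x) :
          Quot (fun x y : X => ∃ t : ℝ, φ t x = y) × ℝ)) =
      (fun x : X => (Quot.mk (fun x y : X => ∃ t : ℝ, φ t x = y) x, f₂ x)) ∧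
    (fun x : X =>
        ((Quot.mk (fun x y : X => ∃ t : ℝ, φ t x = y) x,
          (1 : ℝ) * f₁ x + (1 - (1 : ℝ)) * f₂ x) :
          Quot (fun x y : X => ∃ t : ℝ, φ t x = y) × ℝ)) =
      (fun x : X => (Quot.mk (fun x y : X => ∃ t : ℝ, φ t x = y) x, f₁ x)) ∧
    (∀ s : ℝ, s ∈ Set.Icc (0 : ℝ) 1 →
      Function.Injective (fun x : X =>
        ((Quot.mk (fun x y : X => ∃ t : ℝ, φ t x = y) x,
          s * f₁ x + (1 - s) * f₂ x) :
          Quot (fun x y : X => ∃ t : ℝ, φ t x = y) × ℝ))) := by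
  have hequiv : Equivalence (fun x y : X => ∃ t : ℝ, φ t x = y) := by
    constructor
    · exact fun x => ⟨0, φ.map_zero_apply x⟩
    · rintro x y ⟨t, rfl⟩
      exact ⟨-t, by rw [← φ.map_add]; simp [φ.map_zero_apply]⟩
    · rintro x y z ⟨t, rfl⟩ ⟨u, rfl⟩
      exact ⟨u + t, (φ.map_add u t x)⟩
  have hmono : ∀ s : ℝ, s ∈ Set.Icc (0:ℝ) 1 → ∀ x : X, ∀ t : ℝ, 0 < t →
      s * f₁ x + (1 - s) * f₂ x < s * f₁ (φ t x) + (1 - s) * f₂ (φ t x) := by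
    intro s ⟨hs0, hs1⟩ x t ht
    rcases eq_or_lt_of_le hs0 with h | h
    · rw [← h]; simpa using hLyap₂ x t ht
    · nlinarith [mul_pos h (sub_pos.mpr (hLyap₁ x t ht)),
        mul_nonneg (by linarith : (0:ℝ) ≤ 1 - s) (sub_pos.mpr (hLyap₂ x t ht)).le]
  refine ⟨?_, ?_, ?_, ?_⟩
  · exact ((continuous_quot_mk.comp continuous_snd).prodMk (by fun_prop))
  · funext x; simp
  · funext x; simp
  · intro s hs x y hxy
    simp only [Prod.mk.injEq] at hxy
    obtain ⟨hq, hv⟩ := hxy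
    have hr : ∃ t : ℝ, φ t x = y := (hequiv.eqvGen_iff).mp (Quot.eqvGen_exact hq)
    obtain ⟨t, rfl⟩ := hr
    rcases lt_trichotomy t 0 with h | h | h
    · have := hmono s hs (φ t x) (-t) (by linarith)
      rw [← φ.map_add] at this
      simp [φ.map_zero_apply] at this
      linarith
    · simp [h, φ.map_zero_apply]
    · exact absurd hv (ne_of_lt (hmono s hs x t h))
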